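/- Let v be a vertex of T, let S be the subtree of T consisting of v and all its descendants, and let T(v) be the highest vertex of the decomposition D whose root is v (the largest decomposition subtree rooted at v). Then the vertex set of T(v) is a memory interval, and every vertex of T(v) precedes, in vEB_ε(T), every vertex of S \ T(v); that is, T(v) is exactly the memory-first maximal memory interval contained in S. -/

import Mathlib

namespace VEB

inductive OTree : Type where
  | node : List OTree → OTree

def OTree.children : OTree → List OTree
  | .node cs => cs

mutual
  def height : OTree → ℕ
    | .node cs => 1 + heightList cs
  def heightList : List OTree → ℕ
    | [] => 0
    | c :: cs => max (height c) (heightList cs)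
end

def subtreeAt? : OTree → List ℕ → Option OTree
  | t, [] => some t
  | t, i :: p =>
    match t.children[i]? with
    | some c => subtreeAt? c p
    | none => none

/-- `p` is (the path of) a vertex of `t`. -/
def IsVertex (t : OTree) (p : List ℕ) : Prop := (subtreeAt? t p).isSome

/-- `p` is a leaf of `t`. -/
def IsLeaf (t : OTree) (p : List ℕ) : Prop := subtreeAt? t p = some (.node [])

/-- All leaves of `t` are at the same depth (the bottom level). -/
def Uniform (t : OTree) : Prop := ∀ p, IsLeaf t p → p.length + 1 = height t

/-- The top `m+1` levels of `t` (the truncation of height `m+1`). -/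
def trunc : ℕ → OTree → OTree
  | 0, _ => .node []
  | m+1, t => .node (t.children.map (trunc m))

/-- Paths of the vertices at depth `m`, in left-to-right order. -/
def levelPaths : ℕ → OTree → List (List ℕ)
  | 0, _ => [[]]
  | m+1, t => (t.children.zipIdx.map fun ic => (levelPaths m ic.1).map (ic.2 :: ·)).flatten

/-- The level at which a tree of height `h` is cut: `max ⌊ε h⌋ 1`. -/
noncomputable def cutLevel (ε : ℝ) (h : ℕ) : ℕ := max ⌊ε * (h : ℝ)⌋₊ 1

/-- The van Emde Boas order of the vertex paths of `t` (with recursion fuel). -/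
noncomputable def vEBAux (ε : ℝ) : ℕ → OTree → List (List ℕ)
  | 0, _ => []
  | fuel+1, t =>
    if height t ≤ 1 then [[]]
    else
      let m := cutLevel ε (height t)
      vEBAux ε fuel (trunc (m - 1) t) ++
        ((levelPaths m t).map fun q =>
          match subtreeAt? t q with
          | some s => (vEBAux ε fuel s).map (q ++ ·)
          | none => []).flatten

/-- The van Emde Boas order `vEB_ε(t)` of the vertex paths of `t`. -/
noncomputable def vEB (ε : ℝ) (t : OTree) : List (List ℕ) := vEBAux ε (height t) t

/-- Position (index) of vertex `p` in the van Emde Boas order. -/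
noncomputable def pos (ε : ℝ) (t : OTree) (p : List ℕ) : ℕ := (vEB ε t).idxOf p

/-- `A` is a set of vertices occupying consecutive positions in `vEB_ε(t)`. -/
def MemInterval (ε : ℝ) (t : OTree) (A : Set (List ℕ)) : Prop :=
  ∃ i n, A = {p | p ∈ ((vEB ε t).drop i).take n}

/-- The vertices of the decomposition `D` of `t`: pairs `(p, k)` of the root path
and the height of a decomposition subtree (with recursion fuel). -/
noncomputable def decompAux (ε : ℝ) : ℕ → OTree → List (List ℕ × ℕ)
  | 0, _ => []
  | fuel+1, t =>
    if height t ≤ 1 then [([], 1)]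
    else
      let m := cutLevel ε (height t)
      ([], height t) ::
        (decompAux ε fuel (trunc (m - 1) t) ++
          ((levelPaths m t).map fun q =>
            match subtreeAt? t q with
            | some s => (decompAux ε fuel s).map fun r => (q ++ r.1, r.2)
            | none => []).flatten)

/-- The vertices of the decomposition `D` of `t`. -/
noncomputable def decompVerts (ε : ℝ) (t : OTree) : List (List ℕ × ℕ) :=
  decompAux ε (height t) t

/-- The children in the decomposition tree `D` of the decomposition vertex `(p, k)`:
the top tree followed by the bottom trees in left-to-right order. -/
noncomputable def dChildren (ε : ℝ) (t : OTree) (p : List ℕ) (k : ℕ) : List (List ℕ × ℕ) :=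
  if k ≤ 1 then []
  else
    match subtreeAt? t p with
    | some s =>
      (p, cutLevel ε k) ::
        (levelPaths (cutLevel ε k) s).map fun q => (p ++ q, k - cutLevel ε k)
    | none => []

/-- The decomposition subtree `(p, k)` contains the vertex `w` of `t`;
equivalently, the leaf `{w}` of `D` lies in the subtree of `D` rooted at `(p, k)`. -/
def DContains (p : List ℕ) (k : ℕ) (w : List ℕ) : Prop :=
  p <+: w ∧ w.length < p.length + k

/-- Vertex `v` is to the left of the branch with leaf `ℓ`. -/
def LeftOfBranch (v ℓ : List ℕ) : Prop := List.Lex (· < ·) v (ℓ.take v.length)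

/-- Vertex `v` is to the right of the branch with leaf `ℓ`. -/
def RightOfBranch (v ℓ : List ℕ) : Prop := List.Lex (· < ·) (ℓ.take v.length) v

/-- Every internal vertex of `t` has at least `a` children. -/
def MinArity (t : OTree) (a : ℕ) : Prop :=
  ∀ p s, subtreeAt? t p = some s → s.children ≠ [] → a ≤ s.children.length

/-- Every internal vertex of `t` has at most `b` children. -/
def MaxArity (t : OTree) (b : ℕ) : Prop :=
  ∀ p s, subtreeAt? t p = some s → s.children.length ≤ b

/-- `w` lies on the leftmost branch descending from `v` (always taking the leftmost child). -/
def OnLeftmostBranch (v w : List ℕ) : Prop :=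
  v <+: w ∧ ∀ n (hn : n < w.length), v.length ≤ n → w.get ⟨n, hn⟩ = 0

/-- `w` lies on the rightmost branch descending from `v` (always taking the rightmost child). -/
def OnRightmostBranch (t : OTree) (v w : List ℕ) : Prop :=
  v <+: w ∧ ∀ n (hn : n < w.length), v.length ≤ n →
    ∀ s, subtreeAt? t (w.take n) = some s → w.get ⟨n, hn⟩ + 1 = s.children.length

/-!
Cutting at level `m` lays out the top tree first and then the bottom trees from left to right,
each shifted by the path of its root. By induction along this recursion, the vertices of every
decomposition subtree `(p, k)` form a contiguous block of the layout that no descendant of `p`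
precedes: a block inside the top tree stays in front of all bottom trees, and a block inside the
bottom tree rooted at `q` is preceded only by vertices above level `m` and by the bottom trees
rooted at the other paths of length `m`, none of which extends `p`.
-/

@[simp] lemma height_node (cs : List OTree) : height (.node cs) = 1 + heightList cs := by
  simp [height]

lemma height_pos (t : OTree) : 0 < height t := by
  obtain ⟨cs⟩ := t
  simp

lemma height_le_heightList {c : OTree} {cs : List OTree} (h : c ∈ cs) :
    height c ≤ heightList cs := by
  induction cs with
  | nil => simp at h
  | cons a l ih =>
    rw [heightList]
    rcases List.mem_cons.1 h with rfl | h
    · exact le_max_left _ _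
    · exact (ih h).trans (le_max_right _ _)

lemma heightList_le {cs : List OTree} {n : ℕ} (h : ∀ c ∈ cs, height c ≤ n) :
    heightList cs ≤ n := by
  induction cs with
  | nil => simp [heightList]
  | cons a l ih =>
    rw [heightList, max_le_iff]
    exact ⟨h a (by simp), ih fun c hc => h c (by simp [hc])⟩

lemma eq_node_nil_of_height_le_one {t : OTree} (h : height t ≤ 1) : t = .node [] := by
  obtain ⟨_ | ⟨c, cs⟩⟩ := t
  · rfl
  · have := height_le_heightList (List.mem_cons_self (a := c) (l := cs))
    have := height_pos c
    simp only [height_node] at h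
    omega

lemma subtreeAt?_cons (t : OTree) (i : ℕ) (p : List ℕ) :
    subtreeAt? t (i :: p) = t.children[i]?.bind (subtreeAt? · p) := by
  rw [subtreeAt?]
  cases t.children[i]? <;> rfl

lemma subtreeAt?_append (t : OTree) (p q : List ℕ) :
    subtreeAt? t (p ++ q) = (subtreeAt? t p).bind (subtreeAt? · q) := by
  induction p generalizing t with
  | nil => rfl
  | cons i p ih =>
    simp only [List.cons_append, subtreeAt?_cons]
    cases t.children[i]? <;> simp [ih]

lemma isVertex_nil (t : OTree) : IsVertex t [] := rfl

lemma isVertex_cons {t : OTree} {i : ℕ} {p : List ℕ} :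
    IsVertex t (i :: p) ↔ ∃ c, t.children[i]? = some c ∧ IsVertex c p := by
  simp only [IsVertex, subtreeAt?_cons]
  cases t.children[i]? <;> simp

lemma isVertex_append {t s : OTree} {q : List ℕ} (hs : subtreeAt? t q = some s) (w : List ℕ) :
    IsVertex t (q ++ w) ↔ IsVertex s w := by
  simp [IsVertex, subtreeAt?_append, hs]

lemma IsVertex.of_prefix {t : OTree} {p q : List ℕ} (h : IsVertex t q) (hpq : p <+: q) :
    IsVertex t p := by
  obtain ⟨r, rfl⟩ := hpq
  simp only [IsVertex, subtreeAt?_append] at h ⊢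
  cases hs : subtreeAt? t p <;> simp_all

lemma height_add_length_le {t s : OTree} {q : List ℕ} (hs : subtreeAt? t q = some s) :
    height s + q.length ≤ height t := by
  induction q generalizing t with
  | nil => cases hs; simp
  | cons i q ih =>
    obtain ⟨c, hc, hs⟩ := Option.bind_eq_some_iff.1 ((subtreeAt?_cons t i q).symm.trans hs)
    have := ih hs
    have := height_le_heightList (List.mem_of_getElem? hc)
    obtain ⟨cs⟩ := t
    simp only [OTree.children, height_node, List.length_cons] at *
    omega

lemma IsVertex.length_lt_height {t : OTree} {p : List ℕ} (h : IsVertex t p) :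
    p.length < height t := by
  obtain ⟨s, hs⟩ := Option.isSome_iff_exists.1 h
  have := height_add_length_le hs
  have := height_pos s
  omega

lemma isVertex_node_nil {w : List ℕ} : IsVertex (.node []) w ↔ w = [] := by
  refine ⟨fun h => List.eq_nil_of_length_eq_zero ?_, fun h => h ▸ isVertex_nil _⟩
  have := h.length_lt_height
  simp only [height_node, heightList] at this
  omega

lemma height_trunc_le (m : ℕ) (t : OTree) : height (trunc m t) ≤ m + 1 := by
  induction m generalizing t with
  | zero => simp [trunc, heightList]
  | succ m ih =>
    rw [trunc, height_node]
    have : heightList (t.children.map (trunc m)) ≤ m + 1 :=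
      heightList_le fun c hc => by
        obtain ⟨c', _, rfl⟩ := List.mem_map.1 hc
        exact ih c'
    omega

lemma isVertex_trunc {m : ℕ} {t : OTree} {p : List ℕ} :
    IsVertex (trunc m t) p ↔ IsVertex t p ∧ p.length ≤ m := by
  induction p generalizing m t with
  | nil => simp [isVertex_nil]
  | cons i p ih =>
    cases m with
    | zero => simp [trunc, isVertex_node_nil]
    | succ m =>
      simp only [trunc, isVertex_cons, OTree.children, List.getElem?_map, Option.map_eq_some_iff,
        List.length_cons, Nat.add_le_add_iff_right]
      constructor
      · rintro ⟨_, ⟨c, hc, rfl⟩, h⟩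
        exact ⟨⟨c, hc, (ih.1 h).1⟩, (ih.1 h).2⟩
      · rintro ⟨⟨c, hc, h⟩, hp⟩
        exact ⟨_, ⟨c, hc, rfl⟩, ih.2 ⟨h, hp⟩⟩

lemma mem_levelPaths {m : ℕ} {t : OTree} {q : List ℕ} :
    q ∈ levelPaths m t ↔ IsVertex t q ∧ q.length = m := by
  induction m generalizing t q with
  | zero =>
    simp only [levelPaths, List.mem_singleton, List.length_eq_zero_iff]
    exact ⟨fun h => ⟨h ▸ isVertex_nil t, h⟩, And.right⟩
  | succ m ih =>
    rcases q with _ | ⟨i, q⟩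
    · simp [levelPaths]
    rw [levelPaths, List.mem_flatten, isVertex_cons, List.length_cons, Nat.add_right_cancel_iff]
    constructor
    · rintro ⟨_, hl, hq⟩
      obtain ⟨⟨c, j⟩, hc, rfl⟩ := List.mem_map.1 hl
      obtain ⟨q', hq', h⟩ := List.mem_map.1 hq
      obtain ⟨rfl, rfl⟩ := List.cons_eq_cons.1 h
      exact ⟨⟨c, by simpa using List.mem_zipIdx_iff_getElem?.1 hc, (ih.1 hq').1⟩, (ih.1 hq').2⟩
    · rintro ⟨⟨c, hc, h⟩, hq⟩
      exact ⟨_, List.mem_map.2 ⟨(c, i), List.mem_zipIdx_iff_getElem?.2 (by simpa using hc), rfl⟩,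
        List.mem_map.2 ⟨q, ih.2 ⟨h, hq⟩, rfl⟩⟩

lemma nodup_levelPaths (m : ℕ) (t : OTree) : (levelPaths m t).Nodup := by
  induction m generalizing t with
  | zero => simp [levelPaths]
  | succ m ih =>
    rw [levelPaths, List.nodup_flatten, List.pairwise_map]
    refine ⟨?_, ?_⟩
    · simp only [List.mem_map, Prod.exists, forall_exists_index, and_imp]
      rintro _ c i - rfl
      exact (ih c).map fun a b h => List.cons_injective h
    · have hnd : (t.children.zipIdx.map Prod.snd).Nodup := by
        rw [List.zipIdx_map_snd]
        exact List.nodup_range'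
      refine (List.pairwise_map.1 hnd).imp fun hij x hx hy => ?_
      obtain ⟨_, _, rfl⟩ := List.mem_map.1 hx
      obtain ⟨_, _, h⟩ := List.mem_map.1 hy
      exact hij (List.cons_eq_cons.1 h).1.symm

lemma cutLevel_le {ε : ℝ} (hε : ε ≤ 1/2) {h : ℕ} (h2 : 2 ≤ h) : cutLevel ε h ≤ h - 1 := by
  have : ⌊ε * h⌋₊ ≤ h / 2 := calc
    ⌊ε * h⌋₊ ≤ ⌊(h : ℝ) / (2 : ℕ)⌋₊ :=
      Nat.floor_mono (by push_cast; nlinarith [(Nat.cast_nonneg h : (0 : ℝ) ≤ h)])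
    _ = h / 2 := Nat.floor_div_eq_div h 2
  rw [cutLevel]
  omega

lemma _root_.List.idxOf_lt_idxOf_of_mem_of_notMem {α : Type*} [BEq α] [LawfulBEq α] {l₁ l₂ : List α}
    {a b : α} (ha : a ∈ l₁) (hb : b ∉ l₁) : (l₁ ++ l₂).idxOf a < (l₁ ++ l₂).idxOf b := by
  rw [List.idxOf_append_of_mem ha, List.idxOf_append_of_notMem hb]
  exact (List.idxOf_lt_length_of_mem ha).trans_le (Nat.le_add_right _ _)

lemma dContains_append_iff {q r w : List ℕ} {k : ℕ} :
    DContains (q ++ r) k (q ++ w) ↔ DContains r k w := by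
  simp only [DContains, List.prefix_append_right_inj, List.length_append, Nat.add_assoc,
    Nat.add_lt_add_iff_left]

def HasMemoryFirstBlock (L : List (List ℕ)) (t : OTree) (p : List ℕ) (k : ℕ) : Prop :=
  ∃ A B C, L = A ++ B ++ C ∧ (∀ w, w ∈ B ↔ IsVertex t w ∧ DContains p k w) ∧
    ∀ u ∈ A, ¬ p <+: u

namespace HasMemoryFirstBlock

variable {ε : ℝ} {L : List (List ℕ)} {t : OTree} {p : List ℕ} {k : ℕ}

lemma of_trunc {n : ℕ} (h : HasMemoryFirstBlock L (trunc n t) p k) (hpk : p.length + k ≤ n + 1)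
    (L' : List (List ℕ)) : HasMemoryFirstBlock (L ++ L') t p k := by
  obtain ⟨A, B, C, rfl, hB, hA⟩ := h
  refine ⟨A, B, C ++ L', by simp, fun w => ?_, hA⟩
  rw [hB, isVertex_trunc]
  exact ⟨fun ⟨⟨hw, _⟩, hc⟩ => ⟨hw, hc⟩, fun ⟨hw, hc⟩ => ⟨⟨hw, by have := hc.2; omega⟩, hc⟩⟩

lemma of_subtreeAt? {s : OTree} {q : List ℕ} (h : HasMemoryFirstBlock L s p k)
    (hs : subtreeAt? t q = some s) {P : List (List ℕ)} (hP : ∀ u ∈ P, ¬ q ++ p <+: u)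
    (L' : List (List ℕ)) : HasMemoryFirstBlock (P ++ L.map (q ++ ·) ++ L') t (q ++ p) k := by
  obtain ⟨A, B, C, rfl, hB, hA⟩ := h
  refine ⟨P ++ A.map (q ++ ·), B.map (q ++ ·), C.map (q ++ ·) ++ L', by simp, fun w => ?_, ?_⟩
  · constructor
    · intro hw
      obtain ⟨w', hw', rfl⟩ := List.mem_map.1 hw
      obtain ⟨hv, hc⟩ := (hB w').1 hw'
      exact ⟨(isVertex_append hs w').2 hv, dContains_append_iff.2 hc⟩
    · rintro ⟨hv, hc⟩
      obtain ⟨w', rfl⟩ := (List.prefix_append q p).trans hc.1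
      exact List.mem_map.2 ⟨w', (hB w').2 ⟨(isVertex_append hs w').1 hv,
        dContains_append_iff.1 hc⟩, rfl⟩
  · simp only [List.mem_append, List.mem_map]
    rintro u (hu | ⟨u', hu', rfl⟩)
    · exact hP u hu
    · rw [List.prefix_append_right_inj]
      exact hA u' hu'

lemma memInterval (h : HasMemoryFirstBlock (vEB ε t) t p k) :
    MemInterval ε t {w | IsVertex t w ∧ DContains p k w} := by
  obtain ⟨A, B, C, hL, hB, -⟩ := h
  exact ⟨A.length, B.length, Set.ext fun w => by simp [hL, hB]⟩

lemma pos_lt (h : HasMemoryFirstBlock (vEB ε t) t p k) {w u : List ℕ}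
    (hw : IsVertex t w ∧ DContains p k w) (hpu : p <+: u) (hu : ¬ DContains p k u) :
    pos ε t w < pos ε t u := by
  obtain ⟨A, B, C, hL, hB, hA⟩ := h
  rw [pos, pos, hL]
  refine List.idxOf_lt_idxOf_of_mem_of_notMem (List.mem_append_right A ((hB w).2 hw)) ?_
  rw [List.mem_append]
  rintro (hu' | hu')
  · exact hA u hu' hpu
  · exact hu ((hB u).1 hu').2

end HasMemoryFirstBlock

section Layout

def graft (t : OTree) (F : OTree → List (List ℕ)) (q : List ℕ) : List (List ℕ) :=
  match subtreeAt? t q with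
  | some s => (F s).map (q ++ ·)
  | none => []

variable {ε : ℝ} {f : ℕ} {t : OTree}

lemma graft_of_subtreeAt? {F : OTree → List (List ℕ)} {q : List ℕ} {s : OTree}
    (hs : subtreeAt? t q = some s) : graft t F q = (F s).map (q ++ ·) := by
  simp [graft, hs]

lemma prefix_of_mem_graft {F : OTree → List (List ℕ)} {q u : List ℕ}
    (hu : u ∈ graft t F q) : q <+: u := by
  unfold graft at hu
  split at hu
  · obtain ⟨u', -, rfl⟩ := List.mem_map.1 hu
    exact List.prefix_append q u'
  · simp at hu

lemma vEBAux_succ (h : ¬ height t ≤ 1) :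
    vEBAux ε (f + 1) t = vEBAux ε f (trunc (cutLevel ε (height t) - 1) t) ++
      (levelPaths (cutLevel ε (height t)) t).flatMap (graft t (vEBAux ε f)) := by
  rw [vEBAux, if_neg h]
  rfl

lemma mem_decompAux_succ (h : ¬ height t ≤ 1) {p : List ℕ} {k : ℕ} :
    (p, k) ∈ decompAux ε (f + 1) t ↔ (p = [] ∧ k = height t) ∨
      (p, k) ∈ decompAux ε f (trunc (cutLevel ε (height t) - 1) t) ∨
      ∃ q ∈ levelPaths (cutLevel ε (height t)) t, ∃ s, subtreeAt? t q = some s ∧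
        ∃ r, p = q ++ r ∧ (r, k) ∈ decompAux ε f s := by
  rw [decompAux, if_neg h]
  simp only [List.mem_cons, Prod.mk.injEq, List.mem_append, List.mem_flatten, List.mem_map]
  refine or_congr_right (or_congr_right ⟨?_, ?_⟩)
  · rintro ⟨_, ⟨q, hq, rfl⟩, hmem⟩
    split at hmem
    · obtain ⟨⟨r, k'⟩, hr, he⟩ := List.mem_map.1 hmem
      obtain ⟨rfl, rfl⟩ := Prod.mk.inj he
      exact ⟨q, hq, _, ‹_›, r, rfl, hr⟩
    · simp at hmem
  · rintro ⟨q, hq, s, hs, r, rfl, hr⟩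
    exact ⟨_, ⟨q, hq, rfl⟩, by simp only [hs]; exact List.mem_map.2 ⟨(r, k), hr, rfl⟩⟩

lemma length_add_le_height_of_mem_decompAux (hε : ε ≤ 1/2) {p : List ℕ} {k : ℕ}
    (hpk : (p, k) ∈ decompAux ε f t) : p.length + k ≤ height t := by
  induction f generalizing t p k with
  | zero => simp [decompAux] at hpk
  | succ f ih =>
    by_cases h1 : height t ≤ 1
    · rw [decompAux, if_pos h1, List.mem_singleton, Prod.mk.injEq] at hpk
      obtain ⟨rfl, rfl⟩ := hpk
      exact height_pos t
    have hm := cutLevel_le hε (h := height t) (by omega)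
    rcases (mem_decompAux_succ h1).1 hpk with ⟨rfl, rfl⟩ | htop | ⟨q, -, s, hs, r, rfl, hr⟩
    · simp
    · have := ih htop
      have := height_trunc_le (cutLevel ε (height t) - 1) t
      omega
    · have := ih hr
      have := height_add_length_le hs
      simp only [List.length_append]
      omega

lemma mem_vEBAux (hε : ε ≤ 1/2) (hf : height t ≤ f) {w : List ℕ} :
    w ∈ vEBAux ε f t ↔ IsVertex t w := by
  induction f generalizing t w with
  | zero => exact absurd hf (height_pos t).not_ge
  | succ f ih =>
    by_cases h1 : height t ≤ 1
    · obtain rfl := eq_node_nil_of_height_le_one h1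
      rw [vEBAux, if_pos h1, List.mem_singleton, isVertex_node_nil]
    set m := cutLevel ε (height t)
    have hm : m ≤ height t - 1 := cutLevel_le hε (by omega)
    have hm1 : 1 ≤ m := le_max_right _ _
    have htop : height (trunc (m - 1) t) ≤ f := by
      have := height_trunc_le (m - 1) t
      omega
    rw [vEBAux_succ h1, List.mem_append, ih htop, isVertex_trunc, List.mem_flatMap]
    constructor
    · rintro (⟨hw, -⟩ | ⟨q, hq, hw⟩)
      · exact hw
      obtain ⟨⟨s, hs⟩, hqm⟩ := (mem_levelPaths.1 hq).imp_left Option.isSome_iff_exists.1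
      rw [graft_of_subtreeAt? hs] at hw
      obtain ⟨w', hw', rfl⟩ := List.mem_map.1 hw
      have := height_add_length_le hs
      exact (isVertex_append hs w').2 ((ih (by omega)).1 hw')
    · intro hw
      by_cases hlw : w.length ≤ m - 1
      · exact Or.inl ⟨hw, hlw⟩
      have hq : w.take m ∈ levelPaths m t :=
        mem_levelPaths.2 ⟨hw.of_prefix (List.take_prefix _ _), by simp; omega⟩
      obtain ⟨⟨s, hs⟩, hqm⟩ := (mem_levelPaths.1 hq).imp_left Option.isSome_iff_exists.1
      have := height_add_length_le hs
      refine Or.inr ⟨w.take m, hq, ?_⟩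
      rw [graft_of_subtreeAt? hs]
      refine List.mem_map.2 ⟨w.drop m, (ih (by omega)).2 ?_, List.take_append_drop m w⟩
      rw [← isVertex_append hs, List.take_append_drop]
      exact hw

lemma hasMemoryFirstBlock_vEBAux_self (hε : ε ≤ 1/2) (hf : height t ≤ f) :
    HasMemoryFirstBlock (vEBAux ε f t) t [] (height t) := by
  refine ⟨[], vEBAux ε f t, [], by simp, fun w => ?_, by simp⟩
  rw [mem_vEBAux hε hf]
  exact ⟨fun hw => ⟨hw, List.nil_prefix, by simpa using hw.length_lt_height⟩, And.left⟩

theorem hasMemoryFirstBlock_vEBAux (hε : ε ≤ 1/2) (hf : height t ≤ f) {p : List ℕ} {k : ℕ}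
    (hpk : (p, k) ∈ decompAux ε f t) : HasMemoryFirstBlock (vEBAux ε f t) t p k := by
  induction f generalizing t p k with
  | zero => simp [decompAux] at hpk
  | succ f ih =>
    by_cases h1 : height t ≤ 1
    · rw [decompAux, if_pos h1, List.mem_singleton, Prod.mk.injEq] at hpk
      obtain ⟨rfl, rfl⟩ := hpk
      convert hasMemoryFirstBlock_vEBAux_self hε hf
      have := height_pos t
      omega
    have hself := hasMemoryFirstBlock_vEBAux_self hε hf
    rw [mem_decompAux_succ h1] at hpk
    rw [vEBAux_succ h1] at hself ⊢
    set m := cutLevel ε (height t)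
    have hm : m ≤ height t - 1 := cutLevel_le hε (by omega)
    have hm1 : 1 ≤ m := le_max_right _ _
    have htop : height (trunc (m - 1) t) ≤ m := by
      have := height_trunc_le (m - 1) t
      omega
    rcases hpk with ⟨rfl, rfl⟩ | hpk | ⟨q, hq, s, hs, r, rfl, hr⟩
    · exact hself
    · have := length_add_le_height_of_mem_decompAux hε hpk
      exact (ih (by omega) hpk).of_trunc (by omega) _
    have hqm := (mem_levelPaths.1 hq).2
    obtain ⟨L₁, L₂, hL⟩ := List.append_of_mem hq
    have hqL₁ : q ∉ L₁ := fun h =>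
      (List.nodup_append.1 (hL ▸ nodup_levelPaths m t)).2.2 q h q List.mem_cons_self rfl
    have := height_add_length_le hs
    rw [hL, List.flatMap_append, List.flatMap_cons, graft_of_subtreeAt? hs,
      ← List.append_assoc, ← List.append_assoc]
    refine (ih (by omega) hr).of_subtreeAt? hs (fun u hu hqu => ?_) _
    have hqu : q <+: u := (List.prefix_append q r).trans hqu
    rcases List.mem_append.1 hu with hu | hu
    · have := (isVertex_trunc.1 ((mem_vEBAux hε (by omega)).1 hu)).2
      have := hqu.length_le
      omega
    · obtain ⟨q', hq', hu⟩ := List.mem_flatMap.1 hu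
      have hq'm := (mem_levelPaths.1 (hL ▸ List.mem_append_left _ hq')).2
      have hqq' : q = q' := (List.prefix_of_prefix_length_le hqu (prefix_of_mem_graft hu)
        (by omega)).eq_of_length (by omega)
      exact hqL₁ (hqq' ▸ hq')

end Layout

/-- For a vertex `v` of `T`, let `T(v) = (v, k)` be the largest
decomposition subtree rooted at `v` and `S` the subtree of all descendants of `v`. Then
the vertex set of `T(v)` is a memory interval, and every vertex of `T(v)` precedes every
vertex of `S \ T(v)` in `vEB_ε(T)`: `T(v)` is the memory-first maximal memory interval
contained in `S`. -/
theorem largest_decomp_subtree_memory_first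
    (ε : ℝ) (hε0 : 0 < ε) (hε1 : ε ≤ 1/2) (t : OTree) (ht : Uniform t)
    (v : List ℕ) (hv : IsVertex t v)
    (k : ℕ) (hk : (v, k) ∈ decompVerts ε t)
    (hkmax : ∀ k', (v, k') ∈ decompVerts ε t → k' ≤ k) :
    MemInterval ε t {w | IsVertex t w ∧ DContains v k w} ∧
    ∀ w, IsVertex t w → DContains v k w →
      ∀ u, IsVertex t u → v <+: u → ¬ DContains v k u →
        pos ε t w < pos ε t u := by
  have h := hasMemoryFirstBlock_vEBAux hε1 le_rfl hk
  exact ⟨h.memInterval, fun w hw hwv u _ hvu hnu => h.pos_lt ⟨hw, hwv⟩ hvu hnu⟩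

end VEB
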